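/- (Theorem 5(ii) of the paper, channel-independent form.) Under the secrecy-code setup, suppose in addition that there are real numbers β ≥ 0 and P_e ≥ 0 such that I((V_1,…,V_n); Z) − r ≤ β and Σ_{l∈R} (1 − C_l) ≤ P_e, where C_i := I(V_i; (Z, V_{{1,…,i−1}})) and r = |R|. Then the MIS leakage satisfies I(V_A; Z | V_B) ≤ β + P_e; in particular, if k = |A| > 0 then the normalized MIS leakage satisfies I(V_A; Z | V_B)/k ≤ (β + P_e)/k. -/
import Mathlib


open scoped Classical

noncomputable section

/-- `p` is a probability mass function on the finite sample space `Ω`. -/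
def IsPMF {Ω : Type} [Fintype Ω] (p : Ω → ℝ) : Prop :=
  (∀ ω, 0 ≤ p ω) ∧ ∑ ω, p ω = 1

/-- `P(X = x)`: the probability of the event `{X = x}` under the pmf `p`. -/
def prob {Ω : Type} [Fintype Ω] (p : Ω → ℝ) {α : Type} (X : Ω → α) (x : α) : ℝ :=
  ∑ ω, if X ω = x then p ω else 0

/-- Shannon entropy of `X` in bits (logarithm base 2). -/
def entropy {Ω : Type} [Fintype Ω] (p : Ω → ℝ) {α : Type} [Fintype α] (X : Ω → α) : ℝ :=
  -∑ x, prob p X x * Real.logb 2 (prob p X x)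

/-- Mutual information `I(X;Y) = H(X) + H(Y) - H((X,Y))` in bits. -/
def mutInfo {Ω : Type} [Fintype Ω] (p : Ω → ℝ) {α β : Type} [Fintype α] [Fintype β]
    (X : Ω → α) (Y : Ω → β) : ℝ :=
  entropy p X + entropy p Y - entropy p fun ω => (X ω, Y ω)

/-- Conditional mutual information
`I(X;Y∣W) = H((X,W)) + H((Y,W)) - H((X,Y,W)) - H(W)` in bits. -/
def condMutInfo {Ω : Type} [Fintype Ω] (p : Ω → ℝ) {α β γ : Type}
    [Fintype α] [Fintype β] [Fintype γ] (X : Ω → α) (Y : Ω → β) (W : Ω → γ) : ℝ :=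
  entropy p (fun ω => (X ω, W ω)) + entropy p (fun ω => (Y ω, W ω))
    - entropy p (fun ω => (X ω, Y ω, W ω)) - entropy p W

section Lemmas

variable {Ω : Type} [Fintype Ω] {p : Ω → ℝ}

lemma prob_nonneg (hp : IsPMF p) {α : Type} (X : Ω → α) (x : α) : 0 ≤ prob p X x := by
  unfold prob
  apply Finset.sum_nonneg
  intro ω _
  split <;> simp [hp.1 ω]

lemma sum_prob {α : Type} [Fintype α] (hp : IsPMF p) (X : Ω → α) :
    ∑ x, prob p X x = 1 := by
  unfold prob
  rw [Finset.sum_comm]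
  rw [← hp.2]
  apply Finset.sum_congr rfl
  intro ω _
  simp

lemma prob_comp {α β : Type} [Fintype α] (X : Ω → α) (f : α → β) (y : β) :
    prob p (fun ω => f (X ω)) y = ∑ x, if f x = y then prob p X x else 0 := by
  unfold prob
  have step1 : ∀ x : α, (if f x = y then ∑ ω, if X ω = x then p ω else 0 else 0)
      = ∑ ω, if X ω = x then (if f x = y then p ω else 0) else 0 := by
    intro x
    split
    · apply Finset.sum_congr rfl; intro ω _; split <;> simp_all
    · symm; apply Finset.sum_eq_zero; intro ω _; split <;> simp_all
  rw [Finset.sum_congr rfl (fun x _ => step1 x), Finset.sum_comm]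
  apply Finset.sum_congr rfl
  intro ω _
  rw [Finset.sum_congr rfl (g := fun x => if X ω = x then (if f x = y then p ω else 0) else 0) ?_]
  · rw [Finset.sum_ite_eq]
    simp
  · intro x _
    rfl

lemma entropy_comp_inj {α β : Type} [Fintype α] [Fintype β] (X : Ω → α) (e : α → β)
    (he : Function.Injective e) :
    entropy p (fun ω => e (X ω)) = entropy p X := by
  unfold entropy
  congr 1
  rw [← Finset.sum_subset (Finset.subset_univ (Finset.image e Finset.univ))]
  · rw [Finset.sum_image (fun x _ y _ h => he h)]
    apply Finset.sum_congr rfl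
    intro x _
    have : prob p (fun ω => e (X ω)) (e x) = prob p X x := by
      rw [prob_comp]
      rw [Finset.sum_congr rfl (g := fun x' => if x' = x then prob p X x' else 0)]
      · rw [Finset.sum_ite_eq']; simp
      · intro x' _
        simp [he.eq_iff]
    rw [this]
  · intro y _ hy
    have : prob p (fun ω => e (X ω)) y = 0 := by
      rw [prob_comp]
      apply Finset.sum_eq_zero
      intro x _
      have : ¬ (e x = y) := by
        intro h; exact hy (Finset.mem_image.2 ⟨x, Finset.mem_univ x, h⟩)
      simp [this]
    rw [this]
    simp

end Lemmas
section Lemmas2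

variable {Ω : Type} [Fintype Ω] {p : Ω → ℝ}

lemma sum_comm3 {α β γ : Type} [Fintype α] [Fintype β] [Fintype γ] (F : α → β → γ → ℝ) :
    ∑ x, ∑ y, ∑ w, F x y w = ∑ w, ∑ x, ∑ y, F x y w := by
  calc ∑ x, ∑ y, ∑ w, F x y w = ∑ x, ∑ w, ∑ y, F x y w :=
        Finset.sum_congr rfl (fun x _ => Finset.sum_comm)
    _ = ∑ w, ∑ x, ∑ y, F x y w := Finset.sum_comm

/-- Summing a pair-probability over the first coordinate gives the marginal. -/
lemma sum_prob_pair_fst {α γ : Type} [Fintype α] (X : Ω → α) (W : Ω → γ) (w : γ) :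
    ∑ x, prob p (fun ω => (X ω, W ω)) (x, w) = prob p W w := by
  unfold prob
  rw [Finset.sum_comm]
  apply Finset.sum_congr rfl
  intro ω _
  by_cases hw : W ω = w
  · rw [Finset.sum_congr rfl (g := fun x => if X ω = x then p ω else 0) ?_]
    · rw [Finset.sum_ite_eq]; simp [hw]
    · intro x _; simp [Prod.ext_iff, hw]
  · rw [Finset.sum_eq_zero ?_]
    · simp [hw]
    · intro x _; simp [Prod.ext_iff, hw]

/-- Summing a triple-probability over the middle coordinate gives the pair marginal. -/
lemma sum_prob_triple_snd {α β γ : Type} [Fintype β] (X : Ω → α) (Y : Ω → β) (W : Ω → γ)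
    (x : α) (w : γ) :
    ∑ y, prob p (fun ω => (X ω, Y ω, W ω)) (x, y, w)
      = prob p (fun ω => (X ω, W ω)) (x, w) := by
  unfold prob
  rw [Finset.sum_comm]
  apply Finset.sum_congr rfl
  intro ω _
  by_cases hw : X ω = x ∧ W ω = w
  · rw [Finset.sum_congr rfl (g := fun y => if Y ω = y then p ω else 0) ?_]
    · rw [Finset.sum_ite_eq]; simp [hw.1, hw.2, Prod.ext_iff]
    · intro y _; simp [Prod.ext_iff, hw.1, hw.2]
  · rw [Finset.sum_eq_zero ?_]
    · rw [eq_comm]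
      simp only [Prod.ext_iff]
      rw [if_neg (by tauto)]
    · intro y _
      simp only [Prod.ext_iff]
      rw [if_neg (by tauto)]

lemma condMutInfo_nonneg {α β γ : Type} [Fintype α] [Fintype β] [Fintype γ]
    (hp : IsPMF p) (X : Ω → α) (Y : Ω → β) (W : Ω → γ) :
    0 ≤ condMutInfo p X Y W := by
  classical
  set L : ℝ → ℝ := Real.logb 2 with hL
  set t : α → β → γ → ℝ := fun x y w => prob p (fun ω => (X ω, Y ω, W ω)) (x, y, w) with htdef
  set a : α → γ → ℝ := fun x w => prob p (fun ω => (X ω, W ω)) (x, w) with hadef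
  set b : β → γ → ℝ := fun y w => prob p (fun ω => (Y ω, W ω)) (y, w) with hbdef
  set c : γ → ℝ := fun w => prob p W w with hcdef
  have foldL : ∀ r : ℝ, Real.logb 2 r = L r := fun _ => rfl
  have foldt : ∀ q : α × β × γ, prob p (fun ω => (X ω, Y ω, W ω)) q = t q.1 q.2.1 q.2.2 :=
    fun _ => rfl
  have folda : ∀ q : α × γ, prob p (fun ω => (X ω, W ω)) q = a q.1 q.2 := fun _ => rfl
  have foldb : ∀ q : β × γ, prob p (fun ω => (Y ω, W ω)) q = b q.1 q.2 := fun _ => rfl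
  have foldc : ∀ w : γ, prob p W w = c w := fun _ => rfl
  have ht0 : ∀ x y w, 0 ≤ t x y w := fun x y w => prob_nonneg hp _ _
  have hc0 : ∀ w, 0 ≤ c w := fun w => prob_nonneg hp _ _
  have hat : ∀ x w, a x w = ∑ y, t x y w := by
    intro x w; exact (sum_prob_triple_snd X Y W x w).symm
  have hbt : ∀ y w, b y w = ∑ x, t x y w := by
    intro y w
    exact (sum_prob_pair_fst (p := p) X (fun ω => (Y ω, W ω)) (y, w)).symm
  have hac : ∀ w, ∑ x, a x w = c w := fun w => sum_prob_pair_fst X W w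
  have hbc : ∀ w, ∑ y, b y w = c w := fun w => sum_prob_pair_fst Y W w
  have ha0 : ∀ x w, 0 ≤ a x w := fun x w => prob_nonneg hp _ _
  have hb0 : ∀ y w, 0 ≤ b y w := fun y w => prob_nonneg hp _ _
  have hta : ∀ x y w, t x y w ≤ a x w := by
    intro x y w; rw [hat]
    exact Finset.single_le_sum (fun y' _ => ht0 x y' w) (Finset.mem_univ y)
  have htb : ∀ x y w, t x y w ≤ b y w := by
    intro x y w; rw [hbt]
    exact Finset.single_le_sum (fun x' _ => ht0 x' y w) (Finset.mem_univ x)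
  have htc : ∀ x y w, t x y w ≤ c w := fun x y w => le_trans (hta x y w) (by
    rw [← hac w]
    exact Finset.single_le_sum (fun x' _ => ha0 x' w) (Finset.mem_univ x))
  have hsumt : ∑ x, ∑ y, ∑ w, t x y w = 1 := by
    have h1 := sum_prob (hp := hp) (fun ω => (X ω, Y ω, W ω))
    rw [Fintype.sum_prod_type] at h1
    rw [← h1]
    apply Finset.sum_congr rfl
    intro x _
    rw [Fintype.sum_prod_type]
  -- expansions of the four entropies as triple sums
  have Ht : entropy p (fun ω => (X ω, Y ω, W ω))
      = -∑ x, ∑ y, ∑ w, t x y w * L (t x y w) := by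
    unfold entropy
    simp only [foldt, foldL]
    rw [Fintype.sum_prod_type]
    congr 1
    apply Finset.sum_congr rfl
    intro x _
    rw [Fintype.sum_prod_type]
  have Ha : entropy p (fun ω => (X ω, W ω)) = -∑ x, ∑ y, ∑ w, t x y w * L (a x w) := by
    unfold entropy
    simp only [folda, foldL]
    rw [Fintype.sum_prod_type]
    congr 1
    apply Finset.sum_congr rfl
    intro x _
    rw [Finset.sum_comm]
    apply Finset.sum_congr rfl
    intro w _
    rw [show (∑ y, t x y w * L (a x w)) = (∑ y, t x y w) * L (a x w) from
      (Finset.sum_mul ..).symm, ← hat]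
  have Hb : entropy p (fun ω => (Y ω, W ω)) = -∑ x, ∑ y, ∑ w, t x y w * L (b y w) := by
    unfold entropy
    simp only [foldb, foldL]
    rw [Fintype.sum_prod_type]
    congr 1
    rw [Finset.sum_comm (γ := α)]
    apply Finset.sum_congr rfl
    intro y _
    rw [Finset.sum_comm]
    apply Finset.sum_congr rfl
    intro w _
    rw [show (∑ x, t x y w * L (b y w)) = (∑ x, t x y w) * L (b y w) from
      (Finset.sum_mul ..).symm, ← hbt]
  have Hc : entropy p W = -∑ x, ∑ y, ∑ w, t x y w * L (c w) := by
    unfold entropy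
    simp only [foldc, foldL]
    congr 1
    rw [sum_comm3]
    apply Finset.sum_congr rfl
    intro w _
    rw [show (∑ x, ∑ y, t x y w * L (c w)) = (∑ x, ∑ y, t x y w) * L (c w) by
      rw [Finset.sum_mul]
      exact Finset.sum_congr rfl fun x _ => (Finset.sum_mul ..).symm]
    rw [show (∑ x, ∑ y, t x y w) = ∑ x, a x w from
      Finset.sum_congr rfl fun x _ => (hat x w).symm, hac]
  have hcmi : condMutInfo p X Y W
      = ∑ x, ∑ y, ∑ w, t x y w * (L (t x y w) + L (c w) - L (a x w) - L (b y w)) := by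
    unfold condMutInfo
    rw [Ht, Ha, Hb, Hc]
    simp only [mul_add, mul_sub, Finset.sum_add_distrib, Finset.sum_sub_distrib]
    ring
  -- the pointwise bound
  set u : α → β → γ → ℝ := fun x y w => if 0 < t x y w then a x w * b y w / c w else 0
    with hudef
  have hlog2 : (0:ℝ) < Real.log 2 := Real.log_pos (by norm_num)
  have pointwise : ∀ x y w, (t x y w - u x y w) / Real.log 2
      ≤ t x y w * (L (t x y w) + L (c w) - L (a x w) - L (b y w)) := by
    intro x y w
    by_cases ht : 0 < t x y w
    · have hap : 0 < a x w := lt_of_lt_of_le ht (hta x y w)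
      have hbp : 0 < b y w := lt_of_lt_of_le ht (htb x y w)
      have hcp : 0 < c w := lt_of_lt_of_le ht (htc x y w)
      simp only [hudef, if_pos ht]
      have hr : 0 < a x w * b y w / (c w * t x y w) := by positivity
      have hlog := Real.log_le_sub_one_of_pos hr
      have hlogexp : Real.log (a x w * b y w / (c w * t x y w))
          = Real.log (a x w) + Real.log (b y w) - Real.log (c w) - Real.log (t x y w) := by
        rw [Real.log_div (by positivity) (by positivity), Real.log_mul (ne_of_gt hap)
          (ne_of_gt hbp), Real.log_mul (ne_of_gt hcp) (ne_of_gt ht)]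
        ring
      have hmul : t x y w * (a x w * b y w / (c w * t x y w)) = a x w * b y w / c w := by
        field_simp
      have key : t x y w - a x w * b y w / c w
          ≤ t x y w * (Real.log (t x y w) + Real.log (c w)
            - Real.log (a x w) - Real.log (b y w)) := by
      -- from t * log r ≤ t * (r - 1)
        have h2 := mul_le_mul_of_nonneg_left hlog (le_of_lt ht)
        rw [hlogexp] at h2
        nlinarith [h2, hmul]
      have hLexp : L (t x y w) + L (c w) - L (a x w) - L (b y w)
          = (Real.log (t x y w) + Real.log (c w) - Real.log (a x w) - Real.log (b y w))
            / Real.log 2 := by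
        simp only [hL, Real.logb]
        ring
      rw [hLexp, ← mul_div_assoc, div_le_div_iff_of_pos_right hlog2]
      exact key
    · have ht' : t x y w = 0 := le_antisymm (not_lt.1 ht) (ht0 x y w)
      simp [hudef, ht', ht]
  have sumu : ∑ x, ∑ y, ∑ w, u x y w ≤ 1 := by
    have step : ∀ x y w, u x y w ≤ (if 0 < c w then a x w * b y w / c w else 0) := by
      intro x y w
      by_cases ht : 0 < t x y w
      · have hcp : 0 < c w := lt_of_lt_of_le ht (htc x y w)
        simp only [hudef, if_pos ht, if_pos hcp, le_refl]
      · simp only [hudef, if_neg ht]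
        split
        · exact div_nonneg (mul_nonneg (ha0 x w) (hb0 y w)) (hc0 w)
        · exact le_refl 0
    have inner : ∀ w, (∑ x, ∑ y, (if 0 < c w then a x w * b y w / c w else 0)) ≤ c w := by
      intro w
      by_cases hcw : 0 < c w
      · simp only [if_pos hcw]
        have e1 : ∀ x, (∑ y, a x w * b y w / c w) = a x w := by
          intro x
          rw [show (∑ y, a x w * b y w / c w) = a x w * ((∑ y, b y w) / c w) by
            rw [Finset.sum_div, Finset.mul_sum]
            exact Finset.sum_congr rfl fun y _ => (mul_div_assoc _ _ _)]
          rw [hbc, div_self (ne_of_gt hcw), mul_one]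
        rw [Finset.sum_congr rfl fun x _ => e1 x, hac]
      · simp only [if_neg hcw]
        simp [hc0 w]
    calc ∑ x, ∑ y, ∑ w, u x y w
        ≤ ∑ x, ∑ y, ∑ w, (if 0 < c w then a x w * b y w / c w else 0) := by
          apply Finset.sum_le_sum; intro x _
          apply Finset.sum_le_sum; intro y _
          apply Finset.sum_le_sum; intro w _
          exact step x y w
      _ = ∑ w, ∑ x, ∑ y, (if 0 < c w then a x w * b y w / c w else 0) := sum_comm3 _
      _ ≤ ∑ w, c w := Finset.sum_le_sum fun w _ => inner w
      _ = 1 := sum_prob hp W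
  rw [hcmi]
  have hle : ∑ x, ∑ y, ∑ w, ((t x y w - u x y w) / Real.log 2)
      ≤ ∑ x, ∑ y, ∑ w, t x y w * (L (t x y w) + L (c w) - L (a x w) - L (b y w)) := by
    apply Finset.sum_le_sum; intro x _
    apply Finset.sum_le_sum; intro y _
    apply Finset.sum_le_sum; intro w _
    exact pointwise x y w
  have lhs_eq : ∑ x, ∑ y, ∑ w, ((t x y w - u x y w) / Real.log 2)
      = ((∑ x, ∑ y, ∑ w, t x y w) - (∑ x, ∑ y, ∑ w, u x y w)) / Real.log 2 := by
    simp only [← Finset.sum_div, Finset.sum_sub_distrib]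
  rw [lhs_eq, hsumt] at hle
  have : (0:ℝ) ≤ (1 - ∑ x, ∑ y, ∑ w, u x y w) / Real.log 2 :=
    div_nonneg (by linarith) hlog2.le
  linarith

end Lemmas2
section Lemmas3

variable {Ω : Type} [Fintype Ω] {p : Ω → ℝ}

lemma entropy_const_unit (hp : IsPMF p) : entropy p (fun _ : Ω => ()) = 0 := by
  unfold entropy
  have h1 : prob p (fun _ : Ω => ()) () = 1 := by
    unfold prob; simpa using hp.2
  simp [h1]

lemma entropy_pair_comp {α β : Type} [Fintype α] [Fintype β] (X : Ω → α) (f : α → β) :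
    entropy p (fun ω => (X ω, f (X ω))) = entropy p X :=
  entropy_comp_inj X (fun x => (x, f x)) (fun x y h => (Prod.ext_iff.1 h).1)

lemma mutInfo_nonneg {α β : Type} [Fintype α] [Fintype β] (hp : IsPMF p)
    (X : Ω → α) (Y : Ω → β) : 0 ≤ mutInfo p X Y := by
  have h := condMutInfo_nonneg hp X Y (fun _ : Ω => ())
  unfold condMutInfo at h
  unfold mutInfo
  have e1 : entropy p (fun ω => (X ω, ())) = entropy p X :=
    entropy_comp_inj X (fun x => (x, ())) (fun x y h => (Prod.ext_iff.1 h).1)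
  have e2 : entropy p (fun ω => (Y ω, ())) = entropy p Y :=
    entropy_comp_inj Y (fun x => (x, ())) (fun x y h => (Prod.ext_iff.1 h).1)
  have e3 : entropy p (fun ω => (X ω, Y ω, ())) = entropy p (fun ω => (X ω, Y ω)) :=
    entropy_comp_inj (fun ω => (X ω, Y ω)) (fun q => (q.1, q.2, ()))
      (fun q q' hh => by
        cases q; cases q'; simp_all [Prod.ext_iff])
  rw [e1, e2, e3, entropy_const_unit hp] at h
  linarith

/-- Conditioning on more (a refinement) gives smaller conditional entropy. -/
lemma condEnt_comp_le {α τ σ : Type} [Fintype α] [Fintype τ] [Fintype σ] (hp : IsPMF p)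
    (X : Ω → α) (T : Ω → τ) (φ : τ → σ) :
    entropy p (fun ω => (X ω, T ω)) - entropy p T
      ≤ entropy p (fun ω => (X ω, φ (T ω))) - entropy p (fun ω => φ (T ω)) := by
  have h := condMutInfo_nonneg hp X T (fun ω => φ (T ω))
  unfold condMutInfo at h
  have e1 : entropy p (fun ω => (T ω, φ (T ω))) = entropy p T := entropy_pair_comp T φ
  have e2 : entropy p (fun ω => (X ω, T ω, φ (T ω))) = entropy p (fun ω => (X ω, T ω)) :=
    entropy_comp_inj (fun ω => (X ω, T ω)) (fun q => (q.1, q.2, φ q.2))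
      (fun q q' hh => by
        cases q; cases q'; simp_all [Prod.ext_iff])
  rw [e1, e2] at h
  linarith

end Lemmas3
section Lemmas4

variable {Ω : Type} [Fintype Ω] {p : Ω → ℝ} {n : ℕ}

/-- Restriction of a bit-vector to a subset of coordinates. -/
def restr (D : Finset (Fin n)) (v : Fin n → Bool) : {i // i ∈ D} → Bool := fun i => v i.1

lemma card_restr_fiber (D : Finset (Fin n)) (d : {i // i ∈ D} → Bool) :
    (Finset.univ.filter (fun v : Fin n → Bool => restr D v = d)).card = 2 ^ (n - D.card) := by
  classical
  rw [← Fintype.card_subtype]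
  have e : {v : Fin n → Bool // restr D v = d} ≃ ({i : Fin n // i ∉ D} → Bool) :=
    { toFun := fun v i => v.1 i.1
      invFun := fun g => ⟨fun i => if h : i ∈ D then d ⟨i, h⟩ else g ⟨i, h⟩, by
        funext i
        simp only [restr, i.2, dif_pos]⟩
      left_inv := fun v => by
        apply Subtype.ext
        funext i
        dsimp only
        split
        · next h => exact (congrFun v.2 ⟨i, h⟩).symm
        · rfl
      right_inv := fun g => by
        funext i
        simp only [i.2, dif_neg, not_false_iff] }
  rw [Fintype.card_congr e, Fintype.card_fun, Fintype.card_subtype_compl, Fintype.card_coe,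
    Fintype.card_fin, Fintype.card_bool]

lemma prob_restr (V : Fin n → Ω → Bool)
    (hV : ∀ v : Fin n → Bool, prob p (fun ω i => V i ω) v = (1 / 2 : ℝ) ^ n)
    (D : Finset (Fin n)) (d : {i // i ∈ D} → Bool) :
    prob p (fun ω => restr D (fun i => V i ω)) d = (1 / 2 : ℝ) ^ D.card := by
  classical
  rw [prob_comp (fun ω i => V i ω) (restr D) d]
  rw [Finset.sum_congr rfl (fun v _ => by rw [hV v])]
  trans (∑ v ∈ Finset.univ.filter (fun v => restr D v = d), ((1:ℝ)/2)^n)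
  · rw [Finset.sum_filter]
    exact Finset.sum_congr rfl fun v _ => by
      by_cases h : restr D v = d <;> simp [h]
  rw [Finset.sum_const, card_restr_fiber, nsmul_eq_mul]
  have hD : D.card ≤ n := by
    have := Finset.card_le_univ D
    simpa using this
  have h1 : (1 / 2 : ℝ) ^ n = (1 / 2 : ℝ) ^ (n - D.card) * (1 / 2 : ℝ) ^ D.card := by
    rw [← pow_add]
    congr 1
    omega
  rw [h1]
  push_cast
  rw [← mul_assoc, ← mul_pow]
  norm_num

lemma entropy_restr (V : Fin n → Ω → Bool)
    (hV : ∀ v : Fin n → Bool, prob p (fun ω i => V i ω) v = (1 / 2 : ℝ) ^ n)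
    (D : Finset (Fin n)) :
    entropy p (fun ω => restr D (fun i => V i ω)) = (D.card : ℝ) := by
  classical
  unfold entropy
  rw [Finset.sum_congr rfl (fun d _ => by rw [prob_restr V hV D d])]
  rw [Finset.sum_const]
  have hcard : Fintype.card ({i // i ∈ D} → Bool) = 2 ^ D.card := by
    rw [Fintype.card_fun, Fintype.card_coe, Fintype.card_bool]
  have hlogb : Real.logb 2 ((1 / 2 : ℝ) ^ D.card) = -(D.card : ℝ) := by
    rw [one_div, inv_pow, Real.logb_inv, Real.logb_pow, Real.logb_self_eq_one (by norm_num)]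
    simp
  rw [Finset.card_univ, hcard, hlogb, nsmul_eq_mul]
  push_cast
  rw [show ((2:ℝ) ^ D.card * ((1 / 2 : ℝ) ^ D.card * -(D.card : ℝ))) =
    -((2 * (1/2) : ℝ) ^ D.card * (D.card : ℝ)) by rw [mul_pow]; ring]
  norm_num

end Lemmas4

/-- **Theorem 5(ii)** (channel-independent form). In the secrecy-code setup, if
`I((V 1,…,V n) ; Z) − r ≤ β` and `∑_{l∈R} (1 − C_l) ≤ P_e` with `β, P_e ≥ 0`, then the MIS
leakage satisfies `I(V_A ; Z ∣ V_B) ≤ β + P_e`, and if `k = |A| > 0` the normalized MIS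
leakage satisfies `I(V_A ; Z ∣ V_B)/k ≤ (β + P_e)/k`. -/
theorem stmt16 {Ω : Type} [Fintype Ω] (p : Ω → ℝ) (hp : IsPMF p)
    {n : ℕ} (V : Fin n → Ω → Bool) {ζ : Type} [Fintype ζ] (Z : Ω → ζ)
    (hV : ∀ v : Fin n → Bool, prob p (fun ω i => V i ω) v = (1 / 2 : ℝ) ^ n)
    (A R B : Finset (Fin n))
    (hAR : Disjoint A R) (hAB : Disjoint A B) (hRB : Disjoint R B)
    (hcover : A ∪ R ∪ B = Finset.univ)
    (β Pe : ℝ) (hβ0 : 0 ≤ β) (hPe0 : 0 ≤ Pe)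
    (hβ : mutInfo p (fun ω (i : Fin n) => V i ω) Z - (R.card : ℝ) ≤ β)
    (hPe : ∑ l ∈ R, (1 - mutInfo p (V l)
        (fun ω => (Z ω, fun j : Fin l.val => V (Fin.castLE l.isLt.le j) ω))) ≤ Pe) :
    condMutInfo p (fun ω (i : {i // i ∈ A}) => V i.1 ω) Z
        (fun ω (i : {i // i ∈ B}) => V i.1 ω) ≤ β + Pe
    ∧ (0 < A.card →
        condMutInfo p (fun ω (i : {i // i ∈ A}) => V i.1 ω) Z
            (fun ω (i : {i // i ∈ B}) => V i.1 ω) / (A.card : ℝ)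
          ≤ (β + Pe) / (A.card : ℝ)) := by
    classical
  set X : Ω → Fin n → Bool := fun ω (i : Fin n) => V i ω with hX
  set XA : Ω → {i // i ∈ A} → Bool := fun ω (i : {i // i ∈ A}) => V i.1 ω with hXA
  set XB : Ω → {i // i ∈ B} → Bool := fun ω (i : {i // i ∈ B}) => V i.1 ω with hXB
  set XR : Ω → {i // i ∈ R} → Bool := fun ω (i : {i // i ∈ R}) => V i.1 ω with hXR
  set U : Ω → ζ × ({i // i ∈ A} → Bool) × ({i // i ∈ B} → Bool) :=
    fun ω => (Z ω, XA ω, XB ω) with hU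
  -- membership helper
  have hmem : ∀ i : Fin n, i ∈ A ∪ R ∪ B := fun i => hcover.symm ▸ Finset.mem_univ i
  have hn : A.card + R.card + B.card = n := by
    have h1 : (A ∪ R ∪ B).card = A.card + R.card + B.card := by
      rw [Finset.card_union_of_disjoint (Finset.disjoint_union_left.2 ⟨hAB, hRB⟩),
        Finset.card_union_of_disjoint hAR]
    rw [hcover] at h1
    simpa using h1.symm
  -- entropy computations for uniform subtuples
  have hHX : entropy p X = (n : ℝ) := by
    have h1 : entropy p (fun ω => restr Finset.univ (fun i => V i ω))
        = ((Finset.univ : Finset (Fin n)).card : ℝ) := entropy_restr V hV _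
    have h2 : entropy p (fun ω => restr Finset.univ (fun i => V i ω)) = entropy p X :=
      entropy_comp_inj X (restr Finset.univ)
        (fun u v h => funext fun i => congrFun h ⟨i, Finset.mem_univ i⟩)
    rw [← h2, h1, Finset.card_fin]
  have hHm : ∀ m : Fin n, entropy p (V m) = 1 := by
    intro m
    have e1 : (fun ω => restr {m} (fun i => V i ω))
        = fun ω => (fun _ : {i // i ∈ ({m} : Finset (Fin n))} => V m ω) := by
      funext ω
      funext i
      have : i.1 = m := Finset.mem_singleton.1 i.2
      simp only [restr, this]
    have e2 : entropy p (fun ω => (fun _ : {i // i ∈ ({m} : Finset (Fin n))} => V m ω))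
        = entropy p (V m) :=
      entropy_comp_inj (V m) (fun b _ => b)
        (fun u v h => congrFun h ⟨m, Finset.mem_singleton_self m⟩)
    have e3 := entropy_restr V hV {m}
    rw [e1, e2] at e3
    simpa using e3
  have hHW : entropy p (fun ω => (XA ω, XB ω)) = ((A.card + B.card : ℕ) : ℝ) := by
    have e2 : entropy p (fun ω => (XA ω, XB ω))
        = entropy p (fun ω => restr (A ∪ B) (fun i => V i ω)) :=
      entropy_comp_inj (fun ω => restr (A ∪ B) (fun i => V i ω))
        (fun g => ((fun i : {i // i ∈ A} => g ⟨i.1, Finset.mem_union_left _ i.2⟩),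
                   (fun i : {i // i ∈ B} => g ⟨i.1, Finset.mem_union_right _ i.2⟩)))
        (by
          intro u v h
          funext i
          rcases Finset.mem_union.1 i.2 with h' | h'
          · exact congrFun (congrArg Prod.fst h) ⟨i.1, h'⟩
          · exact congrFun (congrArg Prod.snd h) ⟨i.1, h'⟩)
    rw [e2, entropy_restr V hV,
      Finset.card_union_of_disjoint hAB]
  have hHRW : entropy p (fun ω => (XR ω, XA ω, XB ω)) = entropy p X := by
    exact entropy_comp_inj X
      (fun v => ((fun i : {i // i ∈ R} => v i.1),
                 (fun i : {i // i ∈ A} => v i.1),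
                 (fun i : {i // i ∈ B} => v i.1)))
      (by
        intro u v h
        funext i
        rcases Finset.mem_union.1 (hmem i) with h' | h'
        · rcases Finset.mem_union.1 h' with h'' | h''
          · exact congrFun (congrArg (fun q => q.2.1) h) ⟨i, h''⟩
          · exact congrFun (congrArg (fun q => q.1) h) ⟨i, h''⟩
        · exact congrFun (congrArg (fun q => q.2.2) h) ⟨i, h'⟩)
  have hHRZW : entropy p (fun ω => (XR ω, U ω)) = entropy p (fun ω => (X ω, Z ω)) := by
    exact entropy_comp_inj (fun ω => (X ω, Z ω))
      (fun q => ((fun i : {i // i ∈ R} => q.1 i.1),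
                 (q.2, (fun i : {i // i ∈ A} => q.1 i.1),
                  (fun i : {i // i ∈ B} => q.1 i.1))))
      (by
        intro u v h
        refine Prod.ext ?_ (congrArg (fun q => q.2.1) h)
        funext i
        rcases Finset.mem_union.1 (hmem i) with h' | h'
        · rcases Finset.mem_union.1 h' with h'' | h''
          · exact congrFun (congrArg (fun q => q.2.2.1) h) ⟨i, h''⟩
          · exact congrFun (congrArg (fun q => q.1) h) ⟨i, h''⟩
        · exact congrFun (congrArg (fun q => q.2.2.2) h) ⟨i, h'⟩)
  have hZXB : entropy p (fun ω => (Z ω, XB ω)) = entropy p (fun ω => (XB ω, Z ω)) :=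
    entropy_comp_inj (fun ω => (XB ω, Z ω)) (fun q => (q.2, q.1))
      (fun u v h => Prod.ext (congrArg Prod.snd h) (congrArg Prod.fst h))
  have hAZB : entropy p (fun ω => (XA ω, Z ω, XB ω))
      = entropy p (fun ω => (Z ω, XA ω, XB ω)) :=
    (entropy_comp_inj (fun ω => (XA ω, Z ω, XB ω)) (fun q => (q.2.1, q.1, q.2.2))
      (fun u v h => by
        refine Prod.ext (congrArg (fun q => q.2.1) h)
          (Prod.ext (congrArg (fun q => q.1) h) (congrArg (fun q => q.2.2) h)))).symm
  have hHRZW' : entropy p (fun ω => (XR ω, Z ω, XA ω, XB ω))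
      = entropy p (fun ω => (X ω, Z ω)) := hHRZW
  have key1 : condMutInfo p XA Z XB + condMutInfo p XR Z (fun ω => (XA ω, XB ω))
      + mutInfo p XB Z = mutInfo p X Z := by
    simp only [condMutInfo, mutInfo]
    rw [hHRW, hZXB, hAZB, hHRZW']
    ring
  have key2 : condMutInfo p XR Z (fun ω => (XA ω, XB ω))
      = (R.card : ℝ) - (entropy p (fun ω => (XR ω, U ω)) - entropy p U) := by
    have hUfold : entropy p U = entropy p (fun ω => (Z ω, XA ω, XB ω)) := rfl
    have hXRU : entropy p (fun ω => (XR ω, U ω))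
        = entropy p (fun ω => (XR ω, Z ω, XA ω, XB ω)) := rfl
    have hcast : (R.card : ℝ) = (n : ℝ) - ((A.card + B.card : ℕ) : ℝ) := by
      push_cast
      have : (A.card : ℝ) + R.card + B.card = n := by exact_mod_cast congrArg Nat.cast hn
      linarith
    simp only [condMutInfo]
    rw [hHRW, hHX, hHW, hUfold, hXRU]
    linarith
  -- chain rule bound
  have chain : ∀ S : Finset (Fin n), S ⊆ R → (∀ l ∈ R, l ∉ S → ∀ i ∈ S, i < l) →
      entropy p (fun ω => (restr S (fun i => V i ω), U ω)) - entropy p U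
        ≤ ∑ l ∈ S, (1 - mutInfo p (V l)
            (fun ω => (Z ω, fun j : Fin l.val => V (Fin.castLE l.isLt.le j) ω))) := by
    intro S
    induction S using Finset.strongInduction with
    | _ S ih =>
      intro hSR hinv
      rcases S.eq_empty_or_nonempty with rfl | hne
      · have e0 : (fun ω => (restr (∅ : Finset (Fin n)) (fun i => V i ω), U ω))
            = fun ω => ((fun i : {i // i ∈ (∅ : Finset (Fin n))} =>
                (absurd i.2 (Finset.notMem_empty i.1) : Bool)), U ω) := by
          funext ω
          refine Prod.ext ?_ rfl
          funext i
          exact absurd i.2 (Finset.notMem_empty i.1)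
        have e1 : entropy p (fun ω => ((fun i : {i // i ∈ (∅ : Finset (Fin n))} =>
            (absurd i.2 (Finset.notMem_empty i.1) : Bool)), U ω)) = entropy p U :=
          entropy_comp_inj U (fun u => ((fun i : {i // i ∈ (∅ : Finset (Fin n))} =>
            (absurd i.2 (Finset.notMem_empty i.1) : Bool)), u))
            (fun u v h => congrArg Prod.snd h)
        rw [e0, e1]
        simp
      · set m := S.max' hne with hmdef
        have hmS : m ∈ S := S.max'_mem hne
        have hmR : m ∈ R := hSR hmS
        set S' := S.erase m with hS'def
        have hS'sub : S' ⊆ R := fun i hi => hSR (Finset.mem_of_mem_erase hi)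
        have hinv' : ∀ l ∈ R, l ∉ S' → ∀ i ∈ S', i < l := by
          intro l hl hlS' i hiS'
          by_cases hlS : l ∈ S
          · have hlm : l = m := by
              by_contra hne2
              exact hlS' (Finset.mem_erase.2 ⟨hne2, hlS⟩)
            subst hlm
            exact lt_of_le_of_ne (S.le_max' i (Finset.mem_of_mem_erase hiS'))
              (Finset.mem_erase.1 hiS').1
          · exact hinv l hl hlS i (Finset.mem_of_mem_erase hiS')
        set Tf : Ω → ({i // i ∈ S'} → Bool) × (ζ × ({i // i ∈ A} → Bool) × ({i // i ∈ B} → Bool)) :=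
          fun ω => (restr S' (fun i => V i ω), U ω) with hTf
        -- recoding
        have hrec : entropy p (fun ω => (V m ω, Tf ω))
            = entropy p (fun ω => (restr S (fun i => V i ω), U ω)) :=
          entropy_comp_inj (fun ω => (restr S (fun i => V i ω), U ω))
            (fun q => (q.1 ⟨m, hmS⟩, ((fun i : {i // i ∈ S'} =>
              q.1 ⟨i.1, Finset.mem_of_mem_erase i.2⟩), q.2)))
            (by
              intro u v h
              refine Prod.ext ?_ (congrArg (fun q => q.2.2) h)
              funext i
              by_cases him : i.1 = m
              · have hi : i = ⟨m, hmS⟩ := Subtype.ext him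
                rw [hi]
                exact congrArg Prod.fst h
              · exact congrFun (congrArg (fun q => q.2.1) h)
                  ⟨i.1, Finset.mem_erase.2 ⟨him, i.2⟩⟩)
        -- the step bound
        set φf : (({i // i ∈ S'} → Bool) × (ζ × ({i // i ∈ A} → Bool) × ({i // i ∈ B} → Bool)))
            → ζ × (Fin m.val → Bool) := fun q =>
          (q.2.1, fun j : Fin m.val =>
            if h1 : Fin.castLE m.isLt.le j ∈ S' then q.1 ⟨Fin.castLE m.isLt.le j, h1⟩
            else if h2 : Fin.castLE m.isLt.le j ∈ A then q.2.2.1 ⟨Fin.castLE m.isLt.le j, h2⟩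
            else if h3 : Fin.castLE m.isLt.le j ∈ B then q.2.2.2 ⟨Fin.castLE m.isLt.le j, h3⟩
            else false) with hφf
        have hphi : (fun ω => φf (Tf ω))
            = fun ω => (Z ω, fun j : Fin m.val => V (Fin.castLE m.isLt.le j) ω) := by
          funext ω
          refine Prod.ext rfl ?_
          funext j
          have hilt : (Fin.castLE m.isLt.le j) < m := by
            rw [Fin.lt_def]
            simpa using j.isLt
          show (if h1 : Fin.castLE m.isLt.le j ∈ S'
              then restr S' (fun i => V i ω) ⟨Fin.castLE m.isLt.le j, h1⟩
              else if h2 : Fin.castLE m.isLt.le j ∈ A then XA ω ⟨Fin.castLE m.isLt.le j, h2⟩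
              else if h3 : Fin.castLE m.isLt.le j ∈ B then XB ω ⟨Fin.castLE m.isLt.le j, h3⟩
              else false) = V (Fin.castLE m.isLt.le j) ω
          by_cases h1 : Fin.castLE m.isLt.le j ∈ S'
          · rw [dif_pos h1]; rfl
          · rw [dif_neg h1]
            by_cases h2 : Fin.castLE m.isLt.le j ∈ A
            · rw [dif_pos h2]
            · rw [dif_neg h2]
              by_cases h3 : Fin.castLE m.isLt.le j ∈ B
              · rw [dif_pos h3]
              · exfalso
                have hiR : Fin.castLE m.isLt.le j ∈ R := by
                  rcases Finset.mem_union.1 (hmem (Fin.castLE m.isLt.le j)) with h' | h'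
                  · rcases Finset.mem_union.1 h' with h'' | h''
                    · exact absurd h'' h2
                    · exact h''
                  · exact absurd h' h3
                have hiS : Fin.castLE m.isLt.le j ∈ S := by
                  by_contra hnotS
                  exact absurd hilt (not_lt.2 (le_of_lt (hinv _ hiR hnotS m hmS)))
                exact h1 (Finset.mem_erase.2 ⟨ne_of_lt hilt, hiS⟩)
        have hb := condEnt_comp_le hp (V m) Tf φf
        rw [hphi] at hb
        have hpair : (fun ω => (V m ω, φf (Tf ω)))
            = fun ω => (V m ω, (Z ω, fun j : Fin m.val => V (Fin.castLE m.isLt.le j) ω)) := by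
          funext ω
          exact congrArg (fun t => (V m ω, t)) (congrFun hphi ω)
        rw [hpair] at hb
        have hstep : entropy p (fun ω => (V m ω, Tf ω)) - entropy p Tf
            ≤ 1 - mutInfo p (V m)
              (fun ω => (Z ω, fun j : Fin m.val => V (Fin.castLE m.isLt.le j) ω)) := by
          have hmut : mutInfo p (V m)
              (fun ω => (Z ω, fun j : Fin m.val => V (Fin.castLE m.isLt.le j) ω))
              = entropy p (V m)
                + entropy p (fun ω => (Z ω, fun j : Fin m.val => V (Fin.castLE m.isLt.le j) ω))
                - entropy p (fun ω => (V m ω,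
                    (Z ω, fun j : Fin m.val => V (Fin.castLE m.isLt.le j) ω))) := rfl
          rw [hmut, hHm m]
          linarith [hb]
        have hih := ih S' (Finset.erase_ssubset hmS) hS'sub hinv'
        rw [← hTf] at hih
        have hsum : (∑ l ∈ S, (1 - mutInfo p (V l)
              (fun ω => (Z ω, fun j : Fin l.val => V (Fin.castLE l.isLt.le j) ω))))
            = (∑ l ∈ S', (1 - mutInfo p (V l)
              (fun ω => (Z ω, fun j : Fin l.val => V (Fin.castLE l.isLt.le j) ω))))
            + (1 - mutInfo p (V m)
              (fun ω => (Z ω, fun j : Fin m.val => V (Fin.castLE m.isLt.le j) ω))) :=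
          (Finset.sum_erase_add S _ hmS).symm
        rw [hsum]
        linarith [hrec, hstep, hih]
  -- apply the chain bound with S = R
  have hchainR := chain R (fun _ h => h) (fun l hl hnot => absurd hl hnot)
  have hDD : entropy p (fun ω => (XR ω, U ω)) - entropy p U ≤ Pe := by
    have h1 : entropy p (fun ω => (XR ω, U ω))
        = entropy p (fun ω => (restr R (fun i => V i ω), U ω)) := rfl
    rw [h1]
    exact le_trans hchainR hPe
  have h0B : 0 ≤ mutInfo p XB Z := mutInfo_nonneg hp XB Z
  have main : condMutInfo p XA Z XB ≤ β + Pe := by linarith [key1, key2, hDD, h0B, hβ]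
  refine ⟨main, fun hA => ?_⟩
  have hc : (0 : ℝ) < (A.card : ℝ) := by exact_mod_cast hA
  exact (div_le_div_iff_of_pos_right hc).2 main
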